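/- (CG=DG* for source depending only on t) Let a < b, F : [a,b] → ℝ integrable, û_a ∈ ℝ. Suppose u_CG ∈ 𝒫_{k+1} satisfies ∫_a^b v u_CG' dt = ∫_a^b F v dt for all v ∈ 𝒫_k with u_CG(a) = û_a, and u_DG ∈ 𝒫_k satisfies the DG relation −∫_a^b u_DG v' dt + u_DG(b)v(b) − û_a v(a) = ∫_a^b F v dt for all v ∈ 𝒫_k. Then u_CG = u_DG + (û_a − u_DG(a))𝓡, where 𝓡 is the scaled left-Radau polynomial of degree k+1 on [a,b]; in particular u_CG(b) = u_DG(b). -/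

import Mathlib

/-! Set `E = u_CG - u_DG - (û_a - u_DG(a)) 𝓡 ∈ 𝒫_{k+1}`. For `v ∈ 𝒫_k`, integrating by parts turns
the DG relation into `∫ v u_DG' = ∫ F v + (û_a - u_DG(a)) v(a)`, and the Radau conditions
(`𝓡(b) = 0`, `𝓡(a) = 1`, `𝓡 ⊥ 𝒫_{k-1} ∋ v'`) give `∫ v 𝓡' = -v(a)`; together with the CG relation
this yields `∫ v E' = 0`. Taking `v = E' ∈ 𝒫_k` forces `E' = 0`, so `E` is the constant `E(a) = 0`. -/

open Polynomial MeasureTheory Set intervalIntegral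

namespace Polynomial

theorem degree_derivative_le_of_degree_le_succ {R : Type*} [Semiring R] {p : R[X]} {k : ℕ}
    (hp : p.degree ≤ (k + 1 : ℕ)) : (derivative p).degree ≤ k :=
  degree_le_of_natDegree_le <| (natDegree_derivative_le p).trans <| by
    have := natDegree_le_of_degree_le hp; omega

theorem degree_derivative_lt_of_degree_le {R : Type*} [Semiring R] {p : R[X]} {k : ℕ}
    (hp : p.degree ≤ k) : (derivative p).degree < k := by
  rcases eq_or_ne p 0 with rfl | hp₀
  · simp
  · exact (degree_derivative_lt hp₀).trans_le hp

theorem integral_eval_mul_derivative (p q : ℝ[X]) (a b : ℝ) :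
    ∫ t in a..b, p.eval t * (derivative q).eval t
      = p.eval b * q.eval b - p.eval a * q.eval a
        - ∫ t in a..b, q.eval t * (derivative p).eval t := by
  rw [integral_mul_deriv_eq_deriv_mul (fun t _ => p.hasDerivAt t) (fun t _ => q.hasDerivAt t)
    ((derivative p).continuous.intervalIntegrable _ _)
    ((derivative q).continuous.intervalIntegrable _ _)]
  simp only [mul_comm]

theorem integral_eval_mul_derivative_sub_sub_C_mul (v p q r : ℝ[X]) (c a b : ℝ) :
    ∫ t in a..b, v.eval t * (derivative (p - q - C c * r)).eval t
      = (∫ t in a..b, v.eval t * (derivative p).eval t)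
        - (∫ t in a..b, v.eval t * (derivative q).eval t)
        - c * ∫ t in a..b, v.eval t * (derivative r).eval t := by
  have hint (s : ℝ[X]) : IntervalIntegrable (fun t => v.eval t * (derivative s).eval t) volume a b :=
    (v.continuous.mul (derivative s).continuous).intervalIntegrable _ _
  rw [← integral_sub (hint p) (hint q), ← intervalIntegral.integral_const_mul,
    ← integral_sub ((hint p).sub (hint q)) ((hint r).const_mul c)]
  simp only [derivative_sub, derivative_C_mul, eval_sub, eval_mul, eval_C]
  congr 1; ext t; ring

theorem eq_zero_of_integral_eval_mul_self_eq_zero {p : ℝ[X]} {a b : ℝ} (hab : a < b)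
    (h : ∫ t in a..b, p.eval t * p.eval t = 0) : p = 0 := by
  by_contra hp
  have hroots : volume {t | p.IsRoot t} = 0 := (finite_setOfPred_isRoot hp).measure_zero _
  have hsupp : Function.support (fun t => p.eval t * p.eval t) ∩ Ioc a b
      = Ioc a b \ {t | p.IsRoot t} := by
    ext t; simp [and_comm]
  have hpos : 0 < ∫ t in a..b, p.eval t * p.eval t :=
    (integral_pos_iff_support_of_nonneg_ae
      (Filter.Eventually.of_forall fun t => mul_self_nonneg (p.eval t))
      ((p.continuous.mul p.continuous).intervalIntegrable a b)).2
    ⟨hab, by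
      rw [hsupp, measure_sdiff_null hroots, Real.volume_Ioc]
      exact ENNReal.ofReal_pos.2 (sub_pos.2 hab)⟩
  exact hpos.ne' h

end Polynomial

section RadauDG

variable {k : ℕ} {a b : ℝ}

theorem integral_eval_mul_derivative_of_radau {𝓡 : ℝ[X]} (h𝓡b : 𝓡.eval b = 0)
    (h𝓡a : 𝓡.eval a = 1)
    (h𝓡orth : ∀ w : ℝ[X], w.degree < k → ∫ t in a..b, 𝓡.eval t * w.eval t = 0)
    {v : ℝ[X]} (hv : v.degree ≤ k) :
    ∫ t in a..b, v.eval t * (derivative 𝓡).eval t = -v.eval a := by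
  rw [integral_eval_mul_derivative, h𝓡orth _ (degree_derivative_lt_of_degree_le hv), h𝓡b, h𝓡a]
  ring

theorem integral_eval_mul_derivative_of_dg {F : ℝ → ℝ} {uhat_a : ℝ} {uDG : ℝ[X]}
    (hDG : ∀ v : ℝ[X], v.degree ≤ k →
      -(∫ t in a..b, uDG.eval t * (derivative v).eval t)
          + uDG.eval b * v.eval b - uhat_a * v.eval a
        = ∫ t in a..b, F t * v.eval t)
    {v : ℝ[X]} (hv : v.degree ≤ k) :
    ∫ t in a..b, v.eval t * (derivative uDG).eval t
      = (∫ t in a..b, F t * v.eval t) + (uhat_a - uDG.eval a) * v.eval a := by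
  rw [integral_eval_mul_derivative, ← hDG v hv]
  ring

end RadauDG

theorem cg_eq_postprocessed_dg_general (k : ℕ) (a b : ℝ) (hab : a < b)
    (F : ℝ → ℝ) (uhat_a : ℝ)
    (𝓡 : Polynomial ℝ) (h𝓡deg : 𝓡.degree ≤ ((k + 1 : ℕ) : WithBot ℕ))
    (h𝓡b : 𝓡.eval b = 0) (h𝓡a : 𝓡.eval a = 1)
    (h𝓡orth : ∀ w : Polynomial ℝ, w.degree < (k : ℕ) →
      ∫ t in a..b, 𝓡.eval t * w.eval t = 0)
    (uCG : Polynomial ℝ) (huCGdeg : uCG.degree ≤ ((k + 1 : ℕ) : WithBot ℕ))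
    (hCG : ∀ v : Polynomial ℝ, v.degree ≤ (k : ℕ) →
      ∫ t in a..b, v.eval t * (Polynomial.derivative uCG).eval t
        = ∫ t in a..b, F t * v.eval t)
    (hCGa : uCG.eval a = uhat_a)
    (uDG : Polynomial ℝ) (huDGdeg : uDG.degree ≤ (k : ℕ))
    (hDG : ∀ v : Polynomial ℝ, v.degree ≤ (k : ℕ) →
      -(∫ t in a..b, uDG.eval t * (Polynomial.derivative v).eval t)
          + uDG.eval b * v.eval b - uhat_a * v.eval a
        = ∫ t in a..b, F t * v.eval t) :
    uCG = uDG + Polynomial.C (uhat_a - uDG.eval a) * 𝓡 ∧ uCG.eval b = uDG.eval b := by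
  set c := uhat_a - uDG.eval a
  set E := uCG - uDG - C c * 𝓡 with hE
  have hEdeg : E.degree ≤ (k + 1 : ℕ) :=
    (degree_sub_le _ _).trans <| max_le
      ((degree_sub_le _ _).trans <| max_le huCGdeg <| huDGdeg.trans <| by exact_mod_cast k.le_succ)
      ((smul_eq_C_mul c ▸ degree_smul_le c 𝓡).trans h𝓡deg)
  have hE'orth (v : ℝ[X]) (hv : v.degree ≤ k) :
      ∫ t in a..b, v.eval t * (derivative E).eval t = 0 := by
    rw [hE, integral_eval_mul_derivative_sub_sub_C_mul, hCG v hv,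
      integral_eval_mul_derivative_of_dg hDG hv,
      integral_eval_mul_derivative_of_radau h𝓡b h𝓡a h𝓡orth hv]
    ring
  have hE' : derivative E = 0 :=
    eq_zero_of_integral_eval_mul_self_eq_zero hab
      (hE'orth _ (degree_derivative_le_of_degree_le_succ hEdeg))
  have hE0 : E = 0 := by
    have hEa : E.eval a = 0 := by simp [hE, h𝓡a, hCGa, c]
    rw [eq_C_of_derivative_eq_zero hE'] at hEa ⊢
    simpa using hEa
  have hCG_eq : uCG = uDG + C c * 𝓡 := by linear_combination hE0
  exact ⟨hCG_eq, by simp [hCG_eq, h𝓡b]⟩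

/-- CG = post-processed DG for a source depending only on `t`: If
`u_CG ∈ 𝒫_{k+1}` solves the CG weak formulation with `u_CG(a) = uhat_a`, and
`u_DG ∈ 𝒫_k` solves the DG weak formulation with the same data, and `𝓡 ∈ 𝒫_{k+1}` is the
scaled left-Radau polynomial (`𝓡(b)=0`, `𝓡(a)=1`, orthogonal to `𝒫_{k-1}`), then
`u_CG = u_DG + (uhat_a - u_DG(a))·𝓡`; in particular `u_CG(b) = u_DG(b)`. -/
theorem cg_eq_postprocessed_dg (k : ℕ) (a b : ℝ) (hab : a < b)
    (F : ℝ → ℝ) (hF : IntervalIntegrable F volume a b) (uhat_a : ℝ)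
    (𝓡 : Polynomial ℝ) (h𝓡deg : 𝓡.degree ≤ ((k + 1 : ℕ) : WithBot ℕ))
    (h𝓡b : 𝓡.eval b = 0) (h𝓡a : 𝓡.eval a = 1)
    (h𝓡orth : ∀ w : Polynomial ℝ, w.degree < (k : ℕ) →
      ∫ t in a..b, 𝓡.eval t * w.eval t = 0)
    (uCG : Polynomial ℝ) (huCGdeg : uCG.degree ≤ ((k + 1 : ℕ) : WithBot ℕ))
    (hCG : ∀ v : Polynomial ℝ, v.degree ≤ (k : ℕ) →
      ∫ t in a..b, v.eval t * (Polynomial.derivative uCG).eval t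
        = ∫ t in a..b, F t * v.eval t)
    (hCGa : uCG.eval a = uhat_a)
    (uDG : Polynomial ℝ) (huDGdeg : uDG.degree ≤ (k : ℕ))
    (hDG : ∀ v : Polynomial ℝ, v.degree ≤ (k : ℕ) →
      -(∫ t in a..b, uDG.eval t * (Polynomial.derivative v).eval t)
          + uDG.eval b * v.eval b - uhat_a * v.eval a
        = ∫ t in a..b, F t * v.eval t) :
    uCG = uDG + Polynomial.C (uhat_a - uDG.eval a) * 𝓡 ∧ uCG.eval b = uDG.eval b :=
  cg_eq_postprocessed_dg_general k a b hab F uhat_a 𝓡 h𝓡deg h𝓡b h𝓡a h𝓡orth uCG huCGdeg hCG hCGa uDG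
    huDGdeg hDG
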